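/- For every positive integer n, all complex numbers x, y, and every complex number ω satisfying y ω² + (1−x−y) ω + x = 0, one has (I + (x−ωy−1)S) · M_ASM(n,x,y,1) = M_DPP(n,x,y,1) · (I + (ω−1)Sᵀ), where I is the n×n identity matrix. -/
import Mathlib


open Finset Matrix

/-- M_ASM(n,x,y,1)_{i j} = (1−ω) δ_{i j} + ω ∑_{k=0}^{min(i,j)} C(i,k) C(j,k) x^k y^{i−k}. -/
noncomputable def MASM1 (n : ℕ) (x y ω : ℂ) : Matrix (Fin n) (Fin n) ℂ :=
  Matrix.of fun i j =>
    (1 - ω) * (if i = j then 1 else 0) +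
      ω * ∑ k ∈ Finset.range (min (i : ℕ) (j : ℕ) + 1),
        (Nat.choose i k : ℂ) * (Nat.choose j k : ℂ) * x ^ k * y ^ ((i : ℕ) - k)

/-- M_DPP(n,x,y,1)_{i j} = −δ_{i,j+1} + ∑_{k=0}^{min(i,j+1)} C(i−1,i−k) C(j+1,k) x^k y^{i−k},
with the conventions C(−1,0) = 1 and C(a,b) = 0 for 0 ≤ a < b (realised by
truncated subtraction on ℕ). -/
noncomputable def MDPP1 (n : ℕ) (x y : ℂ) : Matrix (Fin n) (Fin n) ℂ :=
  Matrix.of fun i j =>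
    -(if (i : ℕ) = (j : ℕ) + 1 then 1 else 0) +
      ∑ k ∈ Finset.range (min (i : ℕ) ((j : ℕ) + 1) + 1),
        (Nat.choose ((i : ℕ) - 1) ((i : ℕ) - k) : ℂ) * (Nat.choose ((j : ℕ) + 1) k : ℂ) *
          x ^ k * y ^ ((i : ℕ) - k)

/-- The subdiagonal matrix S with S_{i j} = δ_{i,j+1}. -/
noncomputable def Smat (n : ℕ) : Matrix (Fin n) (Fin n) ℂ :=
  Matrix.of fun i j => if (i : ℕ) = (j : ℕ) + 1 then 1 else 0

/-! ### Auxiliary sums -/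

noncomputable def Af (x y : ℂ) (r j : ℕ) : ℂ :=
  ∑ k ∈ Finset.range (r+1), (r.choose k : ℂ) * (j.choose k : ℂ) * x ^ k * y ^ (r - k)

noncomputable def Bf (x y : ℂ) (r j : ℕ) : ℂ :=
  ∑ k ∈ Finset.range (r+1),
    ((r-1).choose (r-k) : ℂ) * ((j+1).choose k : ℂ) * x ^ k * y ^ (r - k)

lemma Af_eq (x y : ℂ) (r j : ℕ) :
    ∑ k ∈ Finset.range (min r j + 1),
      (r.choose k : ℂ) * (j.choose k : ℂ) * x ^ k * y ^ (r - k) = Af x y r j := by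
  apply Finset.sum_subset (Finset.range_subset_range.2 (by omega))
  intro k hk hk'
  simp only [Finset.mem_range] at hk hk'
  have : j < k := by omega
  simp [Nat.choose_eq_zero_of_lt this]

lemma Bf_eq (x y : ℂ) (r j : ℕ) :
    ∑ k ∈ Finset.range (min r (j+1) + 1),
      ((r-1).choose (r-k) : ℂ) * ((j+1).choose k : ℂ) * x ^ k * y ^ (r - k) = Bf x y r j := by
  apply Finset.sum_subset (Finset.range_subset_range.2 (by omega))
  intro k hk hk'
  simp only [Finset.mem_range] at hk hk'
  have : j + 1 < k := by omega
  simp [Nat.choose_eq_zero_of_lt this]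

lemma Af_zero (x y : ℂ) (r : ℕ) : Af x y r 0 = y ^ r := by
  unfold Af
  rw [Finset.sum_eq_single 0]
  · simp
  · intro k hk hk0
    simp [Nat.choose_eq_zero_of_lt (Nat.pos_of_ne_zero hk0)]
  · simp

lemma Af_zero_row (x y : ℂ) (j : ℕ) : Af x y 0 j = 1 := by
  unfold Af; simp

lemma Bf_zero_row (x y : ℂ) (j : ℕ) : Bf x y 0 j = 1 := by
  unfold Bf; simp

lemma Bf_zero (x y : ℂ) (i : ℕ) : Bf x y (i+1) 0 = x * y ^ i := by
  unfold Bf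
  rw [Finset.sum_eq_single 1]
  · simp
  · intro k hk hk1
    match k, hk1 with
    | 0, _ => simp [Nat.choose_eq_zero_of_lt (Nat.lt_succ_self i)]
    | (k+2), _ => simp [Nat.choose_eq_zero_of_lt (by omega : 1 < k+2)]
  · simp

lemma Bf_shift (x y : ℂ) (i j : ℕ) :
    Bf x y (i+1) j = ∑ k ∈ Finset.range (i+1),
      (i.choose (i-k) : ℂ) * ((j+1).choose (k+1) : ℂ) * x ^ (k+1) * y ^ (i-k) := by
  unfold Bf
  rw [Finset.sum_range_succ']
  simp [Nat.succ_sub_succ, Nat.choose_eq_zero_of_lt (Nat.lt_succ_self i)]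

lemma lemP (x y : ℂ) (i m : ℕ) :
    Bf x y (i+1) (m+1) = Bf x y (i+1) m + x * Af x y i (m+1) := by
  rw [Bf_shift, Bf_shift]
  unfold Af
  rw [Finset.mul_sum, ← Finset.sum_add_distrib]
  apply Finset.sum_congr rfl
  intro k hk
  have hk' : k ≤ i := Nat.lt_succ_iff.mp (Finset.mem_range.mp hk)
  rw [Nat.choose_symm hk']
  push_cast [Nat.choose_succ_succ' (m+1) k]
  ring

lemma lemR (x y : ℂ) (i m : ℕ) :
    Af x y (i+1) (m+1) = y * Af x y i (m+1) + Bf x y (i+1) m := by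
  have h0 : i.choose (i+1) = 0 := Nat.choose_eq_zero_of_lt (by omega)
  have hL : Af x y (i+1) (m+1) =
      (∑ k ∈ Finset.range (i+1),
        ((i.choose k : ℂ) + (i.choose (k+1) : ℂ)) * ((m+1).choose (k+1) : ℂ)
          * x ^ (k+1) * y ^ (i-k)) + y ^ (i+1) := by
    unfold Af
    rw [Finset.sum_range_succ']
    congr 1
    · apply Finset.sum_congr rfl; intro k hk
      rw [Nat.succ_sub_succ]
      push_cast [Nat.choose_succ_succ' i k]
      ring
    · simp
  have hY : y * Af x y i (m+1) =
      (∑ k ∈ Finset.range (i+1),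
        (i.choose (k+1) : ℂ) * ((m+1).choose (k+1) : ℂ) * x ^ (k+1) * y ^ (i-k))
        + y ^ (i+1) := by
    have hext : (∑ k ∈ Finset.range (i+1),
        (i.choose (k+1) : ℂ) * ((m+1).choose (k+1) : ℂ) * x ^ (k+1) * y ^ (i-k))
        = ∑ k ∈ Finset.range i,
        (i.choose (k+1) : ℂ) * ((m+1).choose (k+1) : ℂ) * x ^ (k+1) * y ^ (i-k) := by
      rw [Finset.sum_range_succ, h0]; simp
    rw [hext]
    unfold Af
    rw [Finset.mul_sum, Finset.sum_range_succ']
    congr 1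
    · apply Finset.sum_congr rfl; intro k hk
      have hk' : k < i := Finset.mem_range.mp hk
      rw [show i - k = (i-(k+1))+1 from by omega, pow_succ]
      ring
    · simp [pow_succ]
      ring
  have hB : Bf x y (i+1) m = ∑ k ∈ Finset.range (i+1),
      (i.choose k : ℂ) * ((m+1).choose (k+1) : ℂ) * x ^ (k+1) * y ^ (i-k) := by
    rw [Bf_shift]
    apply Finset.sum_congr rfl; intro k hk
    have hk' : k ≤ i := Nat.lt_succ_iff.mp (Finset.mem_range.mp hk)
    rw [Nat.choose_symm hk']
  rw [hL, hY, hB]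
  have key : (∑ k ∈ Finset.range (i+1),
        ((i.choose k : ℂ) + (i.choose (k+1) : ℂ)) * ((m+1).choose (k+1) : ℂ)
          * x ^ (k+1) * y ^ (i-k))
      = (∑ k ∈ Finset.range (i+1),
        (i.choose (k+1) : ℂ) * ((m+1).choose (k+1) : ℂ) * x ^ (k+1) * y ^ (i-k))
      + (∑ k ∈ Finset.range (i+1),
        (i.choose k : ℂ) * ((m+1).choose (k+1) : ℂ) * x ^ (k+1) * y ^ (i-k)) := by
    rw [← Finset.sum_add_distrib]
    apply Finset.sum_congr rfl; intro k hk
    ring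
  rw [key]; ring

/-! ### Matrix entry lemmas -/

lemma MASM1_apply (n : ℕ) (x y ω : ℂ) (i j : Fin n) :
    MASM1 n x y ω i j =
      (1 - ω) * (if (i:ℕ) = (j:ℕ) then 1 else 0) + ω * Af x y i j := by
  simp only [MASM1, Matrix.of_apply, Af_eq, Fin.ext_iff]

lemma MDPP1_apply (n : ℕ) (x y : ℂ) (i j : Fin n) :
    MDPP1 n x y i j =
      -(if (i:ℕ) = (j:ℕ) + 1 then 1 else 0) + Bf x y i j := by
  simp only [MDPP1, Matrix.of_apply, Bf_eq]

lemma Smat_mul_zero (n : ℕ) (M : Matrix (Fin n) (Fin n) ℂ) (i j : Fin n)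
    (h : (i:ℕ) = 0) : (Smat n * M) i j = 0 := by
  rw [Matrix.mul_apply]
  apply Finset.sum_eq_zero
  intro k _
  simp [Smat, h]

lemma Smat_mul_succ (n : ℕ) (M : Matrix (Fin n) (Fin n) ℂ) (i j : Fin n)
    (i' : ℕ) (h : (i:ℕ) = i' + 1) (hi' : i' < n) :
    (Smat n * M) i j = M ⟨i', hi'⟩ j := by
  rw [Matrix.mul_apply, Finset.sum_eq_single (⟨i', hi'⟩ : Fin n)]
  · simp [Smat, h]
  · intro b _ hb
    have hb' : ¬ ((i:ℕ) = (b:ℕ) + 1) := by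
      intro hc
      exact hb (Fin.ext (show (b:ℕ) = i' by omega))
    simp [Smat, hb']
  · simp

lemma mul_SmatT_zero (n : ℕ) (M : Matrix (Fin n) (Fin n) ℂ) (i j : Fin n)
    (h : (j:ℕ) = 0) : (M * (Smat n)ᵀ) i j = 0 := by
  rw [Matrix.mul_apply]
  apply Finset.sum_eq_zero
  intro k _
  simp [Smat, Matrix.transpose_apply, h]

lemma mul_SmatT_succ (n : ℕ) (M : Matrix (Fin n) (Fin n) ℂ) (i j : Fin n)
    (j' : ℕ) (h : (j:ℕ) = j' + 1) (hj' : j' < n) :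
    (M * (Smat n)ᵀ) i j = M i ⟨j', hj'⟩ := by
  rw [Matrix.mul_apply, Finset.sum_eq_single (⟨j', hj'⟩ : Fin n)]
  · simp [Smat, h]
  · intro b _ hb
    have hb' : ¬ ((j:ℕ) = (b:ℕ) + 1) := by
      intro hc
      exact hb (Fin.ext (show (b:ℕ) = j' by omega))
    simp [Smat, hb']
  · simp

/-- (I + (x−ωy−1)S) M_ASM(n,x,y,1) = M_DPP(n,x,y,1) (I + (ω−1)Sᵀ). -/
theorem MASM1_MDPP1_relation (n : ℕ) (hn : 0 < n) (x y ω : ℂ)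
    (hω : y * ω ^ 2 + (1 - x - y) * ω + x = 0) :
    (1 + (x - ω * y - 1) • Smat n) * MASM1 n x y ω =
      MDPP1 n x y * (1 + (ω - 1) • (Smat n)ᵀ) := by
  ext i j
  rw [Matrix.add_mul, Matrix.one_mul, Matrix.mul_add, Matrix.mul_one,
    Matrix.smul_mul, Matrix.mul_smul]
  rw [Matrix.add_apply, Matrix.add_apply, Matrix.smul_apply, Matrix.smul_apply,
    smul_eq_mul, smul_eq_mul]
  by_cases hi0 : (i:ℕ) = 0
  · rw [Smat_mul_zero n _ i j hi0]
    by_cases hj0 : (j:ℕ) = 0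
    · rw [mul_SmatT_zero n _ i j hj0, MASM1_apply, MDPP1_apply]
      simp only [hi0, hj0, Af_zero_row, Bf_zero_row]
      norm_num
    · obtain ⟨j', hj⟩ : ∃ j', (j:ℕ) = j' + 1 := ⟨(j:ℕ) - 1, by omega⟩
      have hj' : j' < n := by have := j.isLt; omega
      rw [mul_SmatT_succ n _ i j j' hj hj', MASM1_apply, MDPP1_apply, MDPP1_apply]
      simp only [hi0, hj, Fin.val_mk, Af_zero_row, Bf_zero_row]
      norm_num
  · obtain ⟨i', hi⟩ : ∃ i', (i:ℕ) = i' + 1 := ⟨(i:ℕ) - 1, by omega⟩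
    have hi' : i' < n := by have := i.isLt; omega
    rw [Smat_mul_succ n _ i j i' hi hi']
    by_cases hj0 : (j:ℕ) = 0
    · rw [mul_SmatT_zero n _ i j hj0, MASM1_apply, MASM1_apply, MDPP1_apply]
      simp only [hi, hj0, Fin.val_mk, Af_zero, Bf_zero]
      split_ifs <;> first
        | omega
        | exact False.elim (by assumption)
        | linear_combination (-(y:ℂ)^(i':ℕ)) * hω
        | (subst_vars; linear_combination (1 - (y:ℂ)^(0:ℕ)) * hω)
    · obtain ⟨j', hj⟩ : ∃ j', (j:ℕ) = j' + 1 := ⟨(j:ℕ) - 1, by omega⟩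
      have hj' : j' < n := by have := j.isLt; omega
      rw [mul_SmatT_succ n _ i j j' hj hj', MASM1_apply, MASM1_apply,
        MDPP1_apply, MDPP1_apply]
      simp only [hi, hj, Fin.val_mk]
      rw [lemR x y i' j', lemP x y i' j']
      split_ifs <;> first
        | omega
        | exact False.elim (by assumption)
        | linear_combination (-(Af x y i' (j'+1))) * hω
        | linear_combination (1 - Af x y i' (j'+1)) * hω
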